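/- arXiv:2201.06232 — 4 statements merged into one kernel-verified Lean document; each statement's English description precedes it below -/
import Mathlib

section
/- Let p be an odd prime and let {a₁, …, a_k} be a k-Diophantine k-tuple in 𝔽_p with all aᵢ nonzero. If p > 4^{k+1}(3k+5)², then there exists x ∈ 𝔽_p \ {0, a₁, …, a_k} such that a₁a₂⋯a_k·x + 1 is a nonzero square in 𝔽_p; in particular {a₁, …, a_k, x} is a (k+1)-Diophantine (k+1)-tuple in 𝔽_p. -/
/-!
Take `x = (t ^ 2 - 1) / P` with `P = a₁ ⋯ a_k` and `t = 1, …, k + 2`, so that `P x + 1 = t²`.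
Since `2 (k + 2) < p`, the squares `t²` are distinct and nonzero in `𝔽_p`, giving `k + 2`
distinct candidates; at most `k + 1` of them lie in `{0, a₁, …, a_k}`.
-/

open Finset

theorem exists_notMem_isSquare_mul_add_one {K ι : Type*} [Field K] [DecidableEq K] {c : K}
    (hc : c ≠ 0) (A : Finset K) {S : Finset ι} {g : ι → K}
    (hg : Set.InjOn (fun i => g i ^ 2) S) (hg0 : ∀ i ∈ S, g i ≠ 0) (hcard : #A < #S) :
    ∃ x ∉ A, IsSquare (c * x + 1) ∧ c * x + 1 ≠ 0 := by
  set f : ι → K := fun i => (g i ^ 2 - 1) / c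
  have hf : Set.InjOn f S := fun i hi j hj hij =>
    hg hi hj (by simpa [f, div_left_inj' hc] using hij)
  obtain ⟨x, hxS, hxA⟩ := exists_mem_notMem_of_card_lt_card (s := A) (t := S.image f)
    (by rwa [card_image_of_injOn hf])
  obtain ⟨i, hi, rfl⟩ := mem_image.mp hxS
  have hsq : c * f i + 1 = g i ^ 2 := by
    simp only [f]
    field_simp
    ring
  exact ⟨f i, hxA, hsq ▸ ⟨g i, sq (g i)⟩, hsq ▸ pow_ne_zero 2 (hg0 i hi)⟩

theorem ZMod.natCast_sq_injOn {p : ℕ} (hp : p.Prime) :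
    Set.InjOn (fun n : ℕ => (n : ZMod p) ^ 2) {n | 2 * n < p} := by
  have := Fact.mk hp
  intro s hs t ht hst
  simp only [Set.mem_ofPred_eq] at hs ht
  have hprod : ((s : ZMod p) - t) * ((s + t : ℕ) : ZMod p) = 0 := by
    push_cast
    linear_combination hst
  rcases mul_eq_zero.mp hprod with hdiff | hsum
  · rw [sub_eq_zero, ZMod.natCast_eq_natCast_iff'] at hdiff
    rwa [Nat.mod_eq_of_lt (by omega), Nat.mod_eq_of_lt (by omega)] at hdiff
  · have := Nat.eq_zero_of_dvd_of_lt ((ZMod.natCast_eq_zero_iff _ _).mp hsum) (by omega)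
    omega

theorem extend_k_diophantine_k_tuple_general (p k : ℕ) (hp : p.Prime)
    (a : Fin k → ZMod p) (hnz : ∀ i, a i ≠ 0)
    (hbig : 4 ^ (k + 1) * (3 * k + 5) ^ 2 < p) :
    ∃ x : ZMod p, x ≠ 0 ∧ (∀ i, x ≠ a i) ∧
      IsSquare ((∏ i, a i) * x + 1) ∧ (∏ i, a i) * x + 1 ≠ 0 := by
  have := Fact.mk hp
  have hp_large : 2 * (k + 2) < p := by
    have : 4 ≤ 4 ^ (k + 1) := Nat.le_self_pow (by omega) 4
    nlinarith
  have hinj : Set.InjOn (fun n : ℕ => (n : ZMod p) ^ 2) (Icc 1 (k + 2)) :=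
    (ZMod.natCast_sq_injOn hp).mono fun n hn => by
      simp only [coe_Icc, Set.mem_Icc] at hn
      simp only [Set.mem_ofPred_eq]
      omega
  have hne : ∀ n ∈ Icc 1 (k + 2), (n : ZMod p) ≠ 0 := fun n hn h0 => by
    simp only [mem_Icc] at hn
    have := Nat.eq_zero_of_dvd_of_lt ((ZMod.natCast_eq_zero_iff _ _).mp h0) (by omega)
    omega
  have hcard : #(insert 0 (univ.image a)) < #(Icc 1 (k + 2)) := by
    calc #(insert 0 (univ.image a)) ≤ #(univ.image a) + 1 := card_insert_le _ _
      _ ≤ k + 1 := by grw [card_image_le, card_univ, Fintype.card_fin]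
      _ < #(Icc 1 (k + 2)) := by simp
  obtain ⟨x, hxA, hsq, hne0⟩ := exists_notMem_isSquare_mul_add_one
    (prod_ne_zero_iff.mpr fun i _ => hnz i) _ hinj hne hcard
  simp only [mem_insert, mem_image, mem_univ, true_and, not_or, not_exists] at hxA
  exact ⟨x, hxA.1, fun i h => hxA.2 i h.symm, hsq, hne0⟩

theorem extend_k_diophantine_k_tuple (p k : ℕ) (hp : p.Prime) (hodd : Odd p)
    (a : Fin k → ZMod p) (hinj : Function.Injective a) (hnz : ∀ i, a i ≠ 0)
    (hsq : IsSquare ((∏ i, a i) + 1))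
    (hbig : 4 ^ (k + 1) * (3 * k + 5) ^ 2 < p) :
    ∃ x : ZMod p, x ≠ 0 ∧ (∀ i, x ≠ a i) ∧
      IsSquare ((∏ i, a i) * x + 1) ∧ (∏ i, a i) * x + 1 ≠ 0 :=
  extend_k_diophantine_k_tuple_general p k hp a hnz hbig
end

section
/- For every integer k ≥ 2 and every prime p > 4^k(3k+2)², there exists a k-Diophantine k-tuple in 𝔽_p, i.e., k distinct nonzero elements a₁, …, a_k of 𝔽_p such that a₁a₂⋯a_k + 1 is a square in 𝔽_p. -/
lemma sq_fiber_card_le (p : ℕ) [Fact p.Prime] (c : ZMod p) :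
    (Finset.univ.filter (fun x : ZMod p => x ^ 2 = c)).card ≤ 2 := by
  rcases (Finset.univ.filter (fun x : ZMod p => x ^ 2 = c)).eq_empty_or_nonempty with h | ⟨x0, hx0⟩
  · simp [h]
  · have hx0' : x0 ^ 2 = c := (Finset.mem_filter.mp hx0).2
    have hsub : (Finset.univ.filter (fun x : ZMod p => x ^ 2 = c)) ⊆ {x0, -x0} := by
      intro x hx
      have hx' : x ^ 2 = c := (Finset.mem_filter.mp hx).2
      have h2 : (x - x0) * (x + x0) = 0 := by
        have hxx : x ^ 2 = x0 ^ 2 := hx'.trans hx0'.symm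
        linear_combination hxx
      rcases mul_eq_zero.mp h2 with h | h
      · simp [Finset.mem_insert, sub_eq_zero.mp h]
      · simp [Finset.mem_insert, eq_neg_of_add_eq_zero_left h]
    calc _ ≤ ({x0, -x0} : Finset (ZMod p)).card := Finset.card_le_card hsub
      _ ≤ 2 := by
        apply le_trans (Finset.card_insert_le _ _); simp

theorem exists_k_diophantine_k_tuple (k p : ℕ) (hk : 2 ≤ k) (hp : p.Prime)
    (hbig : 4 ^ k * (3 * k + 2) ^ 2 < p) :
    ∃ a : Fin k → ZMod p, Function.Injective a ∧ (∀ i, a i ≠ 0) ∧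
      IsSquare ((∏ i, a i) + 1) := by
  haveI : Fact p.Prime := ⟨hp⟩
  obtain ⟨n, rfl⟩ : ∃ n, k = n + 1 := ⟨k - 1, (Nat.succ_pred_eq_of_pos (by omega)).symm⟩
  have h4 : 1 ≤ 4 ^ (n + 1) := Nat.one_le_pow _ _ (by norm_num)
  have hpbig : 2 * (n + 1) + 1 < p := by nlinarith [hbig, h4]
  set m : ZMod p := ∏ i : Fin n, ((i.val + 1 : ℕ) : ZMod p) with hm
  have hcast_ne : ∀ j : ℕ, 0 < j → j < p → ((j : ℕ) : ZMod p) ≠ 0 := by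
    intro j hj hjp h
    rw [ZMod.natCast_eq_zero_iff] at h
    exact absurd (Nat.le_of_dvd hj h) (by omega)
  have hm0 : m ≠ 0 := by
    rw [hm]
    apply Finset.prod_ne_zero_iff.mpr
    intro i _
    have := i.isLt
    exact hcast_ne _ (by omega) (by omega)
  set S : Finset (ZMod p) := (Finset.range (n + 1)).image (fun j : ℕ => (j : ZMod p) * m + 1)
    with hS
  have hex : ∃ x : ZMod p, x ^ 2 ∉ S := by
    by_contra hcon
    push_neg at hcon
    have hsubset : (Finset.univ : Finset (ZMod p)) ⊆
        S.biUnion (fun c => Finset.univ.filter (fun x => x ^ 2 = c)) := by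
      intro x _
      exact Finset.mem_biUnion.mpr ⟨x ^ 2, hcon x,
        Finset.mem_filter.mpr ⟨Finset.mem_univ x, rfl⟩⟩
    have h1 : p ≤ (S.biUnion (fun c => Finset.univ.filter (fun x => x ^ 2 = c))).card := by
      have := Finset.card_le_card hsubset
      simpa [Finset.card_univ, ZMod.card p] using this
    have h2 : (S.biUnion (fun c => Finset.univ.filter (fun x => x ^ 2 = c))).card
        ≤ S.card * 2 := by
      calc _ ≤ ∑ c ∈ S, (Finset.univ.filter (fun x : ZMod p => x ^ 2 = c)).card :=
            Finset.card_biUnion_le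
        _ ≤ S.card * 2 := by
            have := Finset.sum_le_card_nsmul S
              (fun c => (Finset.univ.filter (fun x : ZMod p => x ^ 2 = c)).card) 2
              (fun c _ => sq_fiber_card_le p c)
            simpa using this
    have h3 : S.card ≤ n + 1 := le_trans (Finset.card_image_le) (by simp)
    omega
  obtain ⟨x, hx⟩ := hex
  have hx1 : x ^ 2 ≠ 1 := by
    intro h
    apply hx
    rw [h, hS]
    exact Finset.mem_image.mpr ⟨0, Finset.mem_range.mpr (by omega), by push_cast; ring⟩
  set y : ZMod p := (x ^ 2 - 1) / m with hy
  have hmy : m * y = x ^ 2 - 1 := by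
    rw [hy]; field_simp
  have hy0 : y ≠ 0 := div_ne_zero (sub_ne_zero.mpr hx1) hm0
  have hyj : ∀ j : ℕ, j < n → y ≠ ((j + 1 : ℕ) : ZMod p) := by
    intro j hj h
    apply hx
    rw [hS]
    refine Finset.mem_image.mpr ⟨j + 1, Finset.mem_range.mpr (by omega), ?_⟩
    have : x ^ 2 - 1 = m * ((j + 1 : ℕ) : ZMod p) := by rw [← h, hmy]
    push_cast at this ⊢
    linear_combination -this
  refine ⟨fun i => if i.val < n then ((i.val + 1 : ℕ) : ZMod p) else y, ?_, ?_, ?_⟩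
  · intro i j h
    simp only at h
    by_cases hi : i.val < n <;> by_cases hj : j.val < n <;>
      simp only [hi, hj, if_pos, if_neg, if_true, if_false] at h
    · have hvi : ((i.val + 1 : ℕ) : ZMod p).val = i.val + 1 :=
        ZMod.val_cast_of_lt (by omega)
      have hvj : ((j.val + 1 : ℕ) : ZMod p).val = j.val + 1 :=
        ZMod.val_cast_of_lt (by omega)
      have := congrArg ZMod.val h
      rw [hvi, hvj] at this
      exact Fin.ext (by omega)
    · exact absurd h.symm (hyj _ hi)
    · exact absurd h (hyj _ hj)
    · have := i.isLt; have := j.isLt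
      exact Fin.ext (by omega)
  · intro i
    by_cases hi : i.val < n <;> simp only [hi, if_pos, if_neg, if_true, if_false]
    · exact hcast_ne _ (by omega) (by omega)
    · exact hy0
  · have hprod : (∏ i : Fin (n + 1),
        if i.val < n then ((i.val + 1 : ℕ) : ZMod p) else y) = m * y := by
      rw [Fin.prod_univ_castSucc]
      have hlast : ¬ ((Fin.last n).val < n) := by simp
      rw [if_neg hlast]
      congr 1
      rw [hm]
      apply Finset.prod_congr rfl
      intro i _
      have : (Fin.castSucc i).val < n := i.isLt
      rw [if_pos this]
      simp [Fin.coe_castSucc]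
    rw [hprod]
    exact ⟨x, by rw [hmy]; ring⟩
end

section
/- For an odd prime p with p ≡ 1 (mod 3), writing p = a² + 3b² with a ≡ 2 (mod 3) and b > 0, the sum over nonzero c ∈ 𝔽_p of the Legendre symbol ((c³+1)/p) equals 2a − 1. For p ≡ 2 (mod 3), this sum equals −1. -/
/-!
Let `χ` be a cubic and `φ` the quadratic character of `𝔽_q`, with `q ≡ 1 mod 3`. Since
`#{x | x³ = u} = 1 + χ u + χ⁻¹ u`, the sum `S = ∑ₓ φ(x³ + 1)` equals `J + J̄` for the Jacobi sum
`J = J(χ, φ)`, and `J J̄ = q`. Writing `J = A + Bω` in `ℤ[ω]` gives `S = 2A - B` and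
`q = A² - AB + B²`. Only the three cube roots of `-1` give vanishing terms, so `S` is even, and
the fibres of `x ↦ x³` over `u ≠ 0` have `0` or `3` points, so `S ≡ 1 mod 3`. Hence `B = 2β` and
`q = (A - β)² + 3β²` with `A - β ≡ 2 mod 3`; for `q = p` prime such a representation is unique.
If `q ≡ 2 mod 3`, cubing is a bijection of `𝔽_q` and `S = ∑ᵤ φ(u) = 0`. The sum over
`c ∈ [1, p - 1]` in the statement is `S - 1`.
-/

open Finset

theorem pow_bijective_of_coprime_card_units {F : Type*} [Field F] [Finite F] {n : ℕ}
    (hn₀ : n ≠ 0) (hn : (Nat.card Fˣ).Coprime n) : Function.Bijective (· ^ n : F → F) := by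
  refine Finite.injective_iff_bijective.mp fun x y (hxy : x ^ n = y ^ n) ↦ ?_
  rcases eq_or_ne x 0 with rfl | hx
  · rw [zero_pow hn₀, eq_comm, pow_eq_zero_iff hn₀] at hxy
    exact hxy.symm
  have hy : y ≠ 0 := by rintro rfl; simp [zero_pow hn₀, hx] at hxy
  have := hn.pow_left_bijective.injective (a₁ := Units.mk0 x hx) (a₂ := Units.mk0 y hy)
    (Units.ext (by simpa using hxy))
  simpa using congrArg Units.val this

section FiniteField

variable {F : Type*} [Field F] [Fintype F]

theorem FiniteField.exists_isPrimitiveRoot {n : ℕ} (h : n ∣ Fintype.card F - 1) :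
    ∃ ζ : F, IsPrimitiveRoot ζ n := by
  classical
  obtain ⟨g, hg⟩ := IsCyclic.exists_ofOrder_eq_natCard (α := Fˣ)
  obtain ⟨m, hm⟩ := h
  rw [Nat.card_eq_fintype_card, Fintype.card_units, hm, mul_comm] at hg
  have hζ := (IsPrimitiveRoot.orderOf g).pow (orderOf_pos g) hg
  rw [← IsPrimitiveRoot.coe_units_iff] at hζ
  exact ⟨(g : F) ^ m, by exact_mod_cast hζ⟩

theorem MulChar.exists_pow_orderOf_eq_of_apply_eq_one {R : Type*} [CommRing R]
    (χ : MulChar F R) {u : F} (hu : u ≠ 0) (h : χ u = 1) : ∃ α : F, α ^ orderOf χ = u := by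
  obtain ⟨g, hg⟩ := IsCyclic.exists_monoid_generator (α := Fˣ)
  obtain ⟨k, hk⟩ : ∃ k, g ^ k = Units.mk0 u hu := hg _
  have hχk : χ ^ k = 1 := by
    refine (MulChar.eq_iff (fun x ↦ mem_powers_iff_mem_zpowers.mp (hg x)) _ _).mpr ?_
    rw [MulChar.pow_apply_coe, MulChar.one_apply_coe, ← map_pow, ← Units.val_pow_eq_pow_val, hk,
      Units.val_mk0, h]
  obtain ⟨m, rfl⟩ := orderOf_dvd_of_pow_eq_one hχk
  refine ⟨(g : F) ^ m, ?_⟩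
  rw [← pow_mul, mul_comm, ← Units.val_pow_eq_pow_val, hk, Units.val_mk0]

variable [DecidableEq F]

theorem card_filter_pow_eq_pow {n : ℕ} [NeZero n] {ζ : F} (hζ : IsPrimitiveRoot ζ n) {α : F}
    (hα : α ≠ 0) : #{x | x ^ n = α ^ n} = n := by
  have hroots : ({x | x ^ n = α ^ n} : Finset F) = Polynomial.nthRootsFinset n (α ^ n) := by
    ext x
    simp [Polynomial.mem_nthRootsFinset (Nat.pos_of_neZero n)]
  classical
  rw [hroots, Polynomial.nthRootsFinset_def,
    Multiset.toFinset_card_of_nodup (hζ.nthRoots_nodup (pow_ne_zero n hα)), hζ.card_nthRoots,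
    if_pos ⟨α, rfl⟩]

theorem MulChar.card_filter_pow_orderOf_eq {R : Type*} [CommRing R] [IsDomain R]
    (χ : MulChar F R) (u : F) :
    (#{x | x ^ orderOf χ = u} : R) = ∑ j ∈ range (orderOf χ), χ u ^ j := by
  obtain ⟨ζ, hζ⟩ := FiniteField.exists_isPrimitiveRoot χ.orderOf_dvd_card_sub_one
  set n := orderOf χ
  have : NeZero n := ⟨χ.orderOf_pos.ne'⟩
  rcases eq_or_ne u 0 with rfl | hu
  · have hzero : ({x | x ^ n = 0} : Finset F) = {0} := by
      ext x
      simp [pow_eq_zero_iff (NeZero.ne n)]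
    obtain ⟨m, hm⟩ := Nat.exists_eq_succ_of_ne_zero (NeZero.ne n)
    rw [hzero, hm]
    simp [sum_range_succ']
  by_cases hcube : ∃ α, α ^ n = u
  · obtain ⟨α, rfl⟩ := hcube
    have hα : α ≠ 0 := by rintro rfl; exact hu (zero_pow (NeZero.ne n))
    have hone : χ (α ^ n) = 1 := by
      rw [map_pow, ← χ.pow_apply' (NeZero.ne n), pow_orderOf_eq_one, MulChar.one_apply hα.isUnit]
    rw [card_filter_pow_eq_pow hζ hα, hone]
    simp
  · have hempty : ({x | x ^ n = u} : Finset F) = ∅ :=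
      filter_false_of_mem fun x _ hx ↦ hcube ⟨x, hx⟩
    have hne : χ u ≠ 1 := fun h ↦ hcube (χ.exists_pow_orderOf_eq_of_apply_eq_one hu h)
    have hpow : χ u ^ n = 1 := by
      rw [← χ.pow_apply' (NeZero.ne n), pow_orderOf_eq_one, MulChar.one_apply hu.isUnit]
    have hgeom := geom_sum_mul (χ u) n
    rw [hpow, sub_self] at hgeom
    rw [hempty, card_empty, Nat.cast_zero, eq_comm]
    exact (mul_eq_zero.mp hgeom).resolve_right (sub_ne_zero.mpr hne)

theorem MulChar.sum_comp_pow_orderOf {R : Type*} [CommRing R] [IsDomain R]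
    (χ : MulChar F R) (f : F → R) :
    ∑ x, f (x ^ orderOf χ) = ∑ u, (∑ j ∈ range (orderOf χ), χ u ^ j) * f u := by
  rw [← sum_fiberwise' univ (· ^ orderOf χ) f]
  simp only [sum_const, nsmul_eq_mul, χ.card_filter_pow_orderOf_eq]

end FiniteField

theorem MulChar.IsQuadratic.mul_ne_one {M R : Type*} [CommMonoid M] [CommRing R]
    {χ φ : MulChar M R} (hφ : φ.IsQuadratic) (hχ : ¬orderOf χ ∣ 2) : χ * φ ≠ 1 := by
  refine fun h ↦ hχ (orderOf_dvd_of_pow_eq_one ?_)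
  calc χ ^ 2 = (χ * φ) ^ 2 := by rw [mul_pow, hφ.sq_eq_one, mul_one]
    _ = 1 := by rw [h, one_pow]

section JacobiSum

variable {F : Type*} [CommRing F] [Fintype F]

theorem MulChar.sum_apply_mul_apply_add_one {R : Type*} [CommRing R] (χ ψ : MulChar F R) :
    ∑ u, χ u * ψ (u + 1) = χ (-1) * jacobiSum χ ψ := by
  rw [jacobiSum, mul_sum, ← Equiv.sum_comp (Equiv.neg F)]
  refine sum_congr rfl fun x _ ↦ ?_
  rw [Equiv.neg_apply, neg_eq_neg_one_mul x, map_mul, neg_one_mul, neg_add_eq_sub, mul_assoc]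

theorem star_jacobiSum (χ ψ : MulChar F ℂ) : star (jacobiSum χ ψ) = jacobiSum χ⁻¹ ψ⁻¹ := by
  rw [← MulChar.star_eq_inv, ← MulChar.star_eq_inv]
  exact (jacobiSum_ringHomComp χ ψ (starRingEnd ℂ)).symm

end JacobiSum

theorem IsPrimitiveRoot.sq_add_self_add_one {R : Type*} [CommRing R] [IsDomain R] {ω : R}
    (hω : IsPrimitiveRoot ω 3) : ω ^ 2 + ω + 1 = 0 := by
  have := hω.geom_sum_eq_zero (by norm_num)
  simp only [sum_range_succ, sum_range_zero, pow_zero, pow_one, zero_add] at this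
  linear_combination this

theorem IsPrimitiveRoot.star_eq_sq {ω : ℂ} (hω : IsPrimitiveRoot ω 3) : star ω = ω ^ 2 := by
  rw [Complex.star_def, ← Complex.inv_eq_conj (hω.norm'_eq_one three_ne_zero)]
  exact inv_eq_of_mul_eq_one_right (by rw [← pow_succ', hω.pow_eq_one])

theorem exists_int_eq_add_mul_of_mem_adjoin {R : Type*} [CommRing R] {ω : R}
    (hω : ω ^ 2 + ω + 1 = 0) {z : R} (hz : z ∈ Algebra.adjoin ℤ {ω}) :
    ∃ A B : ℤ, z = A + B * ω := by
  induction hz using Algebra.adjoin_induction with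
  | mem x hx => exact ⟨0, 1, by rw [Set.mem_singleton_iff.mp hx]; simp⟩
  | algebraMap r => exact ⟨r, 0, by simp⟩
  | add x y _ _ hx hy =>
    obtain ⟨A, B, rfl⟩ := hx
    obtain ⟨C, D, rfl⟩ := hy
    exact ⟨A + C, B + D, by push_cast; ring⟩
  | mul x y _ _ hx hy =>
    obtain ⟨A, B, rfl⟩ := hx
    obtain ⟨C, D, rfl⟩ := hy
    exact ⟨A * C - B * D, A * D + B * C - B * D, by push_cast; linear_combination (↑B * ↑D) * hω⟩

section CubePlusOne

variable {F : Type*} [Field F] [Fintype F] [DecidableEq F]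

theorem sum_pow_three_add_one_eq_jacobiSum_add_star {χ φ : MulChar F ℂ} (hχ : orderOf χ = 3)
    (hφ : φ ≠ 1) (hφ_inv : φ⁻¹ = φ) :
    ∑ x, φ (x ^ 3 + 1) = jacobiSum χ φ + star (jacobiSum χ φ) := by
  have hχ3 : χ ^ 3 = 1 := hχ ▸ pow_orderOf_eq_one χ
  have hχ_sq : χ ^ 2 = χ⁻¹ := eq_inv_of_mul_eq_one_left (by rw [← pow_succ, hχ3])
  have hχ_neg_one : χ (-1) = 1 := MulChar.val_neg_one_eq_one_of_odd_order (by decide : Odd 3) hχ3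
  have hχ_inv_neg_one : χ⁻¹ (-1) = 1 :=
    MulChar.val_neg_one_eq_one_of_odd_order (by decide : Odd 3) (by rw [inv_pow, hχ3, inv_one])
  have hshift : ∑ u, φ (u + 1) = 0 :=
    (Equiv.sum_comp (Equiv.addRight 1) φ).trans (MulChar.sum_eq_zero_of_ne_one hφ)
  have hfiber := χ.sum_comp_pow_orderOf fun u ↦ φ (u + 1)
  simp only [hχ, sum_range_succ, sum_range_zero, pow_zero, pow_one, zero_add] at hfiber
  calc ∑ x, φ (x ^ 3 + 1)
      = ∑ u, φ (u + 1) + ∑ u, χ u * φ (u + 1) + ∑ u, χ⁻¹ u * φ⁻¹ (u + 1) := by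
        rw [hfiber, hφ_inv, ← hχ_sq, ← sum_add_distrib, ← sum_add_distrib]
        refine sum_congr rfl fun u _ ↦ ?_
        rw [MulChar.pow_apply' χ two_ne_zero]
        ring
    _ = jacobiSum χ φ + star (jacobiSum χ φ) := by
        rw [hshift, MulChar.sum_apply_mul_apply_add_one, MulChar.sum_apply_mul_apply_add_one,
          hχ_neg_one, hχ_inv_neg_one, star_jacobiSum]
        ring

theorem exists_sum_quadraticChar_pow_three_add_one (hF : ringChar F ≠ 2)
    (h3 : 3 ∣ Fintype.card F - 1) :
    ∃ A B : ℤ, ∑ x : F, quadraticChar F (x ^ 3 + 1) = 2 * A - B ∧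
      (Fintype.card F : ℤ) = A ^ 2 - A * B + B ^ 2 := by
  obtain ⟨ω, hω⟩ : ∃ ω : ℂ, IsPrimitiveRoot ω 3 :=
    ⟨_, Complex.isPrimitiveRoot_exp 3 (by norm_num)⟩
  obtain ⟨χ, hχ⟩ := MulChar.exists_mulChar_orderOf F h3 hω
  set φ := (quadraticChar F).ringHomComp (Int.castRingHom ℂ)
  have hχ1 : χ ≠ 1 := by rintro rfl; simp at hχ
  have hφ1 : φ ≠ 1 := (MulChar.ringHomComp_ne_one_iff (RingHom.injective_int _)).mpr
    (quadraticChar_ne_one hF)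
  have hφ : φ.IsQuadratic := (quadraticChar_isQuadratic F).comp _
  have hχφ : χ * φ ≠ 1 := hφ.mul_ne_one (by rw [hχ]; norm_num)
  have hmem : jacobiSum χ φ ∈ Algebra.adjoin ℤ {ω} :=
    Subalgebra.sum_mem _ fun x _ ↦ Subalgebra.mul_mem _
      (MulChar.apply_mem_algebraAdjoin (hχ ▸ hω) x) (Subalgebra.intCast_mem _ _)
  obtain ⟨A, B, hJ⟩ := exists_int_eq_add_mul_of_mem_adjoin hω.sq_add_self_add_one hmem
  have hJ_star : star (jacobiSum χ φ) = A - B - B * ω := by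
    rw [hJ, star_add, star_mul', hω.star_eq_sq, star_intCast, star_intCast]
    linear_combination (B : ℂ) * hω.sq_add_self_add_one
  have hsum := sum_pow_three_add_one_eq_jacobiSum_add_star hχ hφ1 hφ.inv
  have hnorm : jacobiSum χ φ * star (jacobiSum χ φ) = Fintype.card F := by
    rw [star_jacobiSum]
    exact jacobiSum_mul_jacobiSum_inv
      (by simpa only [ringChar.eq_zero] using (CharP.ringChar_ne_zero_of_finite F).symm)
      hχ1 hφ1 hχφ
  refine ⟨A, B, Int.cast_injective (α := ℂ) ?_, Int.cast_injective (α := ℂ) ?_⟩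
  · push_cast
    change ∑ x, φ (x ^ 3 + 1) = _
    rw [hsum, hJ_star, hJ]
    ring
  · push_cast
    rw [← hnorm, hJ_star, hJ]
    linear_combination -(B : ℂ) ^ 2 * hω.sq_add_self_add_one

theorem sum_quadraticChar_modEq_card_filter_ne_zero {ι : Type*} (s : Finset ι) (f : ι → F) :
    ∑ i ∈ s, quadraticChar F (f i) ≡ #{i ∈ s | f i ≠ 0} [ZMOD 2] := by
  rw [card_filter, Nat.cast_sum]
  refine Int.ModEq.sum fun i _ ↦ ?_
  by_cases h : f i = 0
  · simp [h]
  · rcases quadraticChar_dichotomy h with h' | h' <;> simp [h, h', Int.ModEq]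

theorem sum_quadraticChar_pow_three_add_one_modEq_three (h3 : 3 ∣ Fintype.card F - 1) :
    ∑ x : F, quadraticChar F (x ^ 3 + 1) ≡ 1 [ZMOD 3] := by
  obtain ⟨ζ, hζ⟩ := FiniteField.exists_isPrimitiveRoot h3
  rw [← sum_fiberwise' univ (· ^ 3) fun u ↦ quadraticChar F (u + 1)]
  simp only [sum_const, nsmul_eq_mul]
  refine (Int.sum_modEq_single (a := 0) (by simp) fun u _ hu ↦ ?_).trans (by simp [filter_eq'])
  by_cases hcube : ∃ α, α ^ 3 = u
  · obtain ⟨α, rfl⟩ := hcube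
    have hα : α ≠ 0 := by rintro rfl; exact hu (zero_pow three_ne_zero)
    rw [card_filter_pow_eq_pow hζ hα, Int.modEq_zero_iff_dvd]
    exact dvd_mul_right _ _
  · rw [filter_false_of_mem fun x _ hx ↦ hcube ⟨x, hx⟩]
    simp

theorem sum_quadraticChar_pow_three_add_one_add_three_modEq_card
    (h3 : 3 ∣ Fintype.card F - 1) :
    ∑ x : F, quadraticChar F (x ^ 3 + 1) + 3 ≡ Fintype.card F [ZMOD 2] := by
  obtain ⟨ζ, hζ⟩ := FiniteField.exists_isPrimitiveRoot h3
  have hroots : #{x : F | ¬x ^ 3 + 1 ≠ 0} = 3 :=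
    calc #{x : F | ¬x ^ 3 + 1 ≠ 0} = #{x : F | x ^ 3 = (-1) ^ 3} := by
          congr 1
          ext x
          simp [add_eq_zero_iff_eq_neg, Odd.neg_one_pow (by decide : Odd 3)]
      _ = 3 := card_filter_pow_eq_pow hζ (neg_ne_zero.mpr one_ne_zero)
  have hcard := card_filter_add_card_filter_not (s := univ) (p := fun x : F ↦ x ^ 3 + 1 ≠ 0)
  rw [hroots, card_univ] at hcard
  rw [← hcard]
  push_cast
  exact (sum_quadraticChar_modEq_card_filter_ne_zero _ _).add_right 3

theorem exists_sum_quadraticChar_pow_three_add_one_eq_two_mul (hF : ringChar F ≠ 2)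
    (h3 : 3 ∣ Fintype.card F - 1) :
    ∃ α β : ℤ, α % 3 = 2 ∧ (Fintype.card F : ℤ) = α ^ 2 + 3 * β ^ 2 ∧
      ∑ x : F, quadraticChar F (x ^ 3 + 1) = 2 * α := by
  obtain ⟨A, B, hsum, hcard⟩ := exists_sum_quadraticChar_pow_three_add_one hF h3
  have hmod3 := sum_quadraticChar_pow_three_add_one_modEq_three h3
  have hmod2 := sum_quadraticChar_pow_three_add_one_add_three_modEq_card h3
  have hodd := FiniteField.odd_card_of_char_ne_two hF
  rw [hsum] at hmod3 hmod2
  unfold Int.ModEq at hmod3 hmod2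
  obtain ⟨β, rfl⟩ : ∃ β, B = 2 * β := ⟨B / 2, by omega⟩
  exact ⟨A - β, β, by omega, by rw [hcard]; ring, by rw [hsum]; ring⟩

theorem sum_quadraticChar_pow_three_add_one_eq_zero (hF : ringChar F ≠ 2)
    (h3 : Fintype.card F % 3 = 2) : ∑ x : F, quadraticChar F (x ^ 3 + 1) = 0 := by
  have hcop : (Nat.card Fˣ).Coprime 3 := by
    rw [Nat.card_eq_fintype_card, Fintype.card_units, Nat.coprime_comm,
      Nat.Prime.coprime_iff_not_dvd Nat.prime_three]
    omega
  rw [(pow_bijective_of_coprime_card_units three_ne_zero hcop).sum_comp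
    fun u ↦ quadraticChar F (u + 1)]
  exact (Equiv.sum_comp (Equiv.addRight 1) _).trans (quadraticChar_sum_zero hF)

end CubePlusOne

theorem eq_zero_of_sq_add_three_mul_sq_eq_sq {P x k : ℤ} (hP : P ≠ 0) (hk : P ∣ k)
    (h : x ^ 2 + 3 * k ^ 2 = P ^ 2) : k = 0 := by
  obtain ⟨m, rfl⟩ := hk
  have hm : P ^ 2 * (3 * m ^ 2) ≤ P ^ 2 * 1 := by nlinarith [sq_nonneg x]
  have hm' := le_of_mul_le_mul_left hm (by positivity)
  have : m = 0 := by nlinarith [sq_nonneg m]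
  rw [this, mul_zero]

theorem eq_of_sq_add_three_mul_sq_eq {P a b c d : ℤ} (hP : Prime P)
    (h₁ : P = a ^ 2 + 3 * b ^ 2) (h₂ : P = c ^ 2 + 3 * d ^ 2) (ha : a % 3 = 2) (hc : c % 3 = 2) :
    a = c := by
  have hdvd : P ∣ (a * d - b * c) * (a * d + b * c) :=
    ⟨d ^ 2 - b ^ 2, by linear_combination (-d ^ 2) * h₁ + b ^ 2 * h₂⟩
  have hsq : a ^ 2 = c ^ 2 := by
    refine mul_left_cancel₀ hP.ne_zero ?_
    rcases hP.dvd_or_dvd hdvd with h | h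
    · have := eq_zero_of_sq_add_three_mul_sq_eq_sq (x := a * c + 3 * b * d) hP.ne_zero h
        (by linear_combination (-(c ^ 2 + 3 * d ^ 2)) * h₁ - P * h₂)
      linear_combination a ^ 2 * h₂ - c ^ 2 * h₁ + 3 * (a * d + b * c) * this
    · have := eq_zero_of_sq_add_three_mul_sq_eq_sq (x := a * c - 3 * b * d) hP.ne_zero h
        (by linear_combination (-(c ^ 2 + 3 * d ^ 2)) * h₁ - P * h₂)
      linear_combination a ^ 2 * h₂ - c ^ 2 * h₁ + 3 * (a * d - b * c) * this
  rcases eq_or_eq_neg_of_sq_eq_sq _ _ hsq with h | h <;> omega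

theorem ZMod.sum_Icc_natCast {M : Type*} [AddCommGroup M] (n : ℕ) [NeZero n] (g : ZMod n → M) :
    ∑ c ∈ Icc 1 (n - 1), g c = ∑ x, g x - g 0 := by
  rw [eq_sub_iff_add_eq, ← sum_erase_add _ _ (mem_univ 0)]
  congr 1
  refine sum_nbij' (↑) ZMod.val (fun c hc ↦ ?_) (fun x hx ↦ ?_) (fun c hc ↦ ?_)
    (fun x _ ↦ ZMod.natCast_zmod_val x) (fun _ _ ↦ rfl)
  · obtain ⟨h1, h2⟩ := mem_Icc.mp hc
    rw [mem_erase, ne_eq, ZMod.natCast_eq_zero_iff]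
    exact ⟨fun h ↦ by have := Nat.le_of_dvd (by omega) h; omega, mem_univ _⟩
  · have h1 : x.val ≠ 0 := (ZMod.val_ne_zero x).mpr (ne_of_mem_erase hx)
    have h2 := ZMod.val_lt x
    exact mem_Icc.mpr ⟨by omega, by omega⟩
  · have h1 := (mem_Icc.mp hc).2
    have h2 := NeZero.pos n
    exact ZMod.val_natCast_of_lt (by omega)

theorem sum_legendre_cube_plus_one (p : ℕ) [Fact p.Prime] (hodd : Odd p) :
    (∀ a b : ℤ, a % 3 = 2 → 0 < b → (p : ℤ) = a ^ 2 + 3 * b ^ 2 →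
      ∑ c ∈ Finset.Icc 1 (p - 1), legendreSym p ((c : ℤ) ^ 3 + 1) = 2 * a - 1) ∧
    (p % 3 = 2 →
      ∑ c ∈ Finset.Icc 1 (p - 1), legendreSym p ((c : ℤ) ^ 3 + 1) = -1) := by
  have hF : ringChar (ZMod p) ≠ 2 := by
    rw [ZMod.ringChar_zmod_n]
    have := Nat.odd_iff.mp hodd
    omega
  have hsum : ∑ c ∈ Icc 1 (p - 1), legendreSym p ((c : ℤ) ^ 3 + 1) =
      ∑ x : ZMod p, quadraticChar (ZMod p) (x ^ 3 + 1) - 1 := by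
    have := ZMod.sum_Icc_natCast p fun x ↦ quadraticChar (ZMod p) (x ^ 3 + 1)
    rw [zero_pow three_ne_zero, zero_add, map_one] at this
    rw [← this]
    simp only [legendreSym, Int.cast_add, Int.cast_pow, Int.cast_natCast, Int.cast_one]
  refine ⟨fun a b ha _ hab ↦ ?_, fun hp3 ↦ ?_⟩
  · have hp3 : 3 ∣ Fintype.card (ZMod p) - 1 := by
      obtain ⟨k, rfl⟩ : ∃ k, a = 3 * k + 2 := ⟨a / 3, by omega⟩
      have : (p : ℤ) = 3 * (3 * k ^ 2 + 4 * k + b ^ 2 + 1) + 1 := by linear_combination hab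
      rw [ZMod.card]
      omega
    obtain ⟨α, β, hα, hcard, hS⟩ := exists_sum_quadraticChar_pow_three_add_one_eq_two_mul hF hp3
    rw [ZMod.card] at hcard
    rw [hsum, hS,
      eq_of_sq_add_three_mul_sq_eq (Nat.prime_iff_prime_int.mp Fact.out) hcard hab hα ha]
  · rw [hsum, sum_quadraticChar_pow_three_add_one_eq_zero hF (by rwa [ZMod.card])]
    rfl
end

section
/- Let N_k(p) denote the number of k-Diophantine k-tuples in 𝔽_p (unordered sets of k distinct nonzero elements whose product plus 1 is a square in 𝔽_p, where 0 counts as a square). Then for fixed k, N_k(p) = p^k/(2·k!) + o(p^k) as p → ∞ over primes; concretely, |2·k!·N_k(p) − p^k| ≤ C_k · p^{k−1/2} for some constant C_k depending only on k. -/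
/-!
Let `N` be the number of `k`-Diophantine `k`-tuples. Count ordered tuples of units instead of
sets: `k! N` is the number of injective `(u₁, …, u_k) ∈ (𝔽_p^×)^k` with `u₁⋯u_k + 1` a square.
Without injectivity the count is exact: the product map `(𝔽_p^×)^k → 𝔽_p^×` has all fibres of
size `(p-1)^(k-1)` and exactly `(p-1)/2` units `c` have `c + 1` a square, so there are
`(p-1)^k / 2` such tuples. At most `C(k,2) (p-1)^(k-1)` tuples are not injective, hence
`|2 k! N - p^k| ≤ k² p^(k-1)`; the Weil bound is not needed.
-/

open Finset
open scoped Nat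

theorem Nat.pow_succ_le_descFactorial_add (n : ℕ) :
    ∀ k : ℕ, n ^ (k + 1) ≤ n.descFactorial (k + 1) + (k + 1).choose 2 * n ^ k
  | 0 => by simp
  | k + 1 => by
    have hdesc : n * n.descFactorial (k + 1) ≤
        n.descFactorial (k + 1 + 1) + (k + 1) * n ^ (k + 1) := by
      rw [Nat.descFactorial_succ n (k + 1)]
      calc n * n.descFactorial (k + 1) ≤ (n - (k + 1) + (k + 1)) * n.descFactorial (k + 1) := by
            gcongr; omega
        _ ≤ _ := by rw [add_mul]; gcongr; exact Nat.descFactorial_le_pow n (k + 1)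
    rw [Nat.choose_succ_succ' (k + 1), Nat.choose_one_right]
    calc n ^ (k + 1 + 1) = n * n ^ (k + 1) := by ring
      _ ≤ n * (n.descFactorial (k + 1) + (k + 1).choose 2 * n ^ k) :=
        Nat.mul_le_mul_left n (Nat.pow_succ_le_descFactorial_add n k)
      _ = n * n.descFactorial (k + 1) + (k + 1).choose 2 * n ^ (k + 1) := by ring
      _ ≤ _ := by linarith

theorem card_not_injective_le (α : Type*) [Finite α] (k : ℕ) :
    Nat.card {f : Fin (k + 1) → α // ¬ Function.Injective f} ≤
      (k + 1).choose 2 * Nat.card α ^ k := by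
  classical
  have := Fintype.ofFinite α
  have hinj : Nat.card {f : Fin (k + 1) → α // Function.Injective f} =
      (Nat.card α).descFactorial (k + 1) := by
    rw [Nat.card_congr (Equiv.subtypeInjectiveEquivEmbedding _ _), Nat.card_eq_fintype_card,
      Fintype.card_embedding_eq, Fintype.card_fin, Nat.card_eq_fintype_card]
  have hsum := Nat.card_congr (Equiv.sumCompl fun f : Fin (k + 1) → α => Function.Injective f)
  rw [Nat.card_sum, hinj, Nat.card_fun, Nat.card_eq_fintype_card (α := Fin _),
    Fintype.card_fin] at hsum
  have := Nat.pow_succ_le_descFactorial_add (Nat.card α) k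
  omega

theorem card_injective_image_eq_factorial {α : Type*} [DecidableEq α] {k : ℕ} (s : Finset α)
    (hs : #s = k) :
    Nat.card {f : Fin k → α // Function.Injective f ∧ univ.image f = s} = k ! := by
  have mem_iff (f : {f : Fin k → α // Function.Injective f ∧ univ.image f = s}) (x : α) :
      x ∈ s ↔ ∃ i, f.1 i = x := by simp [← f.2.2]
  let e : {f : Fin k → α // Function.Injective f ∧ univ.image f = s} ≃ (Fin k ≃ s) :=
    { toFun f := Equiv.ofBijective (fun i => ⟨f.1 i, (mem_iff f _).2 ⟨i, rfl⟩⟩)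
        ⟨fun i j h => f.2.1 (congrArg Subtype.val h), fun x =>
          let ⟨i, hi⟩ := (mem_iff f x).1 x.2; ⟨i, Subtype.ext hi⟩⟩
      invFun e := ⟨fun i => e i, fun i j h => e.injective (Subtype.ext h), by
        ext x
        simp only [mem_image, mem_univ, true_and]
        exact ⟨by rintro ⟨i, rfl⟩; exact (e i).2, fun hx => ⟨e.symm ⟨x, hx⟩, by simp⟩⟩⟩
      left_inv f := rfl
      right_inv e := by ext; rfl }
  rw [Nat.card_congr e, Nat.card_eq_fintype_card, Fintype.card_equiv (s.equivFinOfCardEq hs).symm,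
    Fintype.card_fin]

theorem card_injective_eq_factorial_mul {α : Type*} [Finite α] [DecidableEq α] (k : ℕ)
    (Q : Finset α → Prop) :
    Nat.card {f : Fin k → α // Function.Injective f ∧ Q (univ.image f)} =
      k ! * Nat.card {s : Finset α // #s = k ∧ Q s} := by
  classical
  have := Fintype.ofFinite α
  let image : {f : Fin k → α // Function.Injective f ∧ Q (univ.image f)} →
      {s : Finset α // #s = k ∧ Q s} := fun f =>
    ⟨univ.image f.1, by rw [card_image_of_injective _ f.2.1, card_fin], f.2.2⟩
  have hfiber (s : {s : Finset α // #s = k ∧ Q s}) : Nat.card {f // image f = s} = k ! := by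
    rw [← card_injective_image_eq_factorial s.1 s.2.1]
    refine Nat.card_congr ((Equiv.subtypeEquivRight fun f => ?_).trans
      (Equiv.subtypeSubtypeEquivSubtype (q := fun f => Function.Injective f ∧ univ.image f = s.1)
        fun h => ⟨h.1, h.2 ▸ s.2.2⟩))
    exact ⟨fun h => ⟨f.2.1, congrArg Subtype.val h⟩, fun h => Subtype.ext h.2⟩
  rw [← Nat.card_congr (Equiv.sigmaFiberEquiv image), Nat.card_sigma]
  simp only [hfiber, Finset.sum_const, Finset.card_univ, smul_eq_mul, Nat.card_eq_fintype_card,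
    mul_comm]

def Fin.prodTailEquiv (G : Type*) [CommGroup G] (k : ℕ) :
    (Fin (k + 1) → G) ≃ G × (Fin k → G) where
  toFun f := (∏ i, f i, Fin.tail f)
  invFun x := Fin.cons (x.1 * (∏ i, x.2 i)⁻¹) x.2
  left_inv f := by
    conv_rhs => rw [← Fin.cons_self_tail f]
    simp [Fin.prod_univ_succ, Fin.tail]
  right_inv x := by simp [Fin.prod_cons]

theorem card_prod_fin_succ_eq {G : Type*} [CommGroup G] [Finite G] (P : G → Prop) (k : ℕ) :
    Nat.card {f : Fin (k + 1) → G // P (∏ i, f i)} = Nat.card {g // P g} * Nat.card G ^ k := by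
  calc Nat.card {f : Fin (k + 1) → G // P (∏ i, f i)} = Nat.card ({g // P g} × (Fin k → G)) :=
        Nat.card_congr (((Fin.prodTailEquiv G k).subtypeEquiv (q := fun x => P x.1)
          fun _ => Iff.rfl).trans Equiv.prodSubtypeFstEquivSubtypeProd)
    _ = _ := by rw [Nat.card_prod, Nat.card_fun, Nat.card_eq_fintype_card (α := Fin k),
      Fintype.card_fin]

theorem abs_factorial_mul_card_finset_prod_sub_le {G : Type*} [CommGroup G] [Finite G]
    [DecidableEq G] (P : G → Prop) (k : ℕ) :
    |((k + 1)! * Nat.card {T : Finset G // #T = k + 1 ∧ P (∏ g ∈ T, g)} : ℝ) -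
        Nat.card {g // P g} * Nat.card G ^ k| ≤ (k + 1).choose 2 * Nat.card G ^ k := by
  have hinj : (k + 1)! * Nat.card {T : Finset G // #T = k + 1 ∧ P (∏ g ∈ T, g)} =
      Nat.card {f : Fin (k + 1) → G // P (∏ i, f i) ∧ Function.Injective f} := by
    rw [← card_injective_eq_factorial_mul (k + 1) fun T => P (∏ g ∈ T, g)]
    exact Nat.card_congr (Equiv.subtypeEquivRight fun f =>
      and_comm.trans (and_congr_left fun hf => by rw [prod_image fun i _ j _ h => hf h]))
  have hsplit := Nat.card_congr (Equiv.sumCompl fun f : {f : Fin (k + 1) → G // P (∏ i, f i)} =>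
    Function.Injective f.1)
  rw [Nat.card_sum, card_prod_fin_succ_eq,
    Nat.card_congr (Equiv.subtypeSubtypeEquivSubtypeInter _ _),
    Nat.card_congr (Equiv.subtypeSubtypeEquivSubtypeInter _ fun f => ¬ Function.Injective f)]
    at hsplit
  have hbad : Nat.card {f : Fin (k + 1) → G // P (∏ i, f i) ∧ ¬ Function.Injective f} ≤
      (k + 1).choose 2 * Nat.card G ^ k :=
    (Nat.card_le_card_of_injective _ (Subtype.impEmbedding _ _ fun _ hf => hf.2).injective).trans
      (card_not_injective_le G k)
  rw [← hinj] at hsplit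
  have hsplit' := congrArg (Nat.cast : ℕ → ℝ) hsplit
  have hbad' := (Nat.cast_le (α := ℝ)).2 hbad
  push_cast at hsplit' hbad'
  rw [abs_le]
  constructor <;> linarith

theorem card_finset_units_eq {M : Type*} [CommGroupWithZero M] (k : ℕ) (R : M → Prop) :
    Nat.card {T : Finset Mˣ // #T = k ∧ R ↑(∏ u ∈ T, u)} =
      Nat.card {S : Finset M // #S = k ∧ 0 ∉ S ∧ R (S.prod id)} := by
  let val : Mˣ ↪ M := ⟨Units.val, Units.val_injective⟩
  have hprod (T : Finset Mˣ) : ((∏ u ∈ T, u : Mˣ) : M) = (T.map val).prod id := by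
    simp [prod_map, val]
  refine Nat.card_eq_of_bijective (fun T => ⟨T.1.map val, ?_⟩) ⟨fun T T' h => ?_, fun S => ?_⟩
  · refine ⟨by rw [card_map, T.2.1], fun h => ?_, hprod T.1 ▸ T.2.2⟩
    obtain ⟨u, -, hu⟩ := mem_map.1 h
    exact u.ne_zero hu
  · exact Subtype.ext (map_injective val (congrArg Subtype.val h))
  · have hS : (S.1.preimage val val.injective.injOn).map val = S.1 := by
      ext x
      simp only [mem_map, mem_preimage]
      refine ⟨fun ⟨u, hu, hux⟩ => hux ▸ hu, fun hx => ?_⟩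
      have hx0 : x ≠ 0 := fun h => S.2.2.1 (h ▸ hx)
      exact ⟨Units.mk0 x hx0, hx, rfl⟩
    refine ⟨⟨S.1.preimage val val.injective.injOn, ?_⟩, Subtype.ext hS⟩
    rw [← card_map val, hprod, hS]
    exact ⟨S.2.1, S.2.2.2⟩

theorem abs_pow_succ_sub_pow_succ_sub_one_le {R : Type*} [CommRing R] [LinearOrder R]
    [IsStrictOrderedRing R] {x : R} (hx : 1 ≤ x) (m : ℕ) :
    |x ^ (m + 1) - (x - 1) ^ (m + 1)| ≤ (m + 1) * x ^ m := by
  have hmax : max |x| |x - 1| = x := by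
    rw [abs_of_nonneg (by linarith), abs_of_nonneg (by linarith), max_eq_left (by linarith)]
  have := abs_pow_sub_pow_le x (x - 1) (m + 1)
  rwa [sub_sub_cancel, abs_one, one_mul, hmax, Nat.add_sub_cancel, Nat.cast_succ] at this

namespace FiniteField

variable {F : Type*} [Field F] [Fintype F]

theorem two_mul_card_isSquare (hF : ringChar F ≠ 2) :
    2 * Nat.card {x : F // IsSquare x} = Fintype.card F + 1 := by
  classical
  have hpoint (x : F) : (if IsSquare x then 2 else 0 : ℤ) =
      quadraticChar F x + 1 + if x = 0 then 1 else 0 := by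
    by_cases hx : x = 0
    · simp [hx]
    · rcases quadraticChar_dichotomy hx with h | h
      · simp [(quadraticChar_one_iff_isSquare hx).1 h, h, hx]
      · simp [quadraticChar_neg_one_iff_not_isSquare.1 h, h, hx]
  have hsum := Finset.sum_congr rfl fun x (_ : x ∈ univ) => hpoint x
  rw [sum_add_distrib, sum_add_distrib, quadraticChar_sum_zero hF, sum_ite_eq' univ (0 : F),
    ← sum_filter, sum_const, sum_const, card_univ] at hsum
  rw [Nat.card_eq_fintype_card, Fintype.card_subtype]
  simp only [mem_univ, if_true, zero_add, nsmul_eq_mul, mul_one] at hsum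
  exact_mod_cast (mul_comm _ _).trans hsum

theorem two_mul_card_units_isSquare_add_one (hF : ringChar F ≠ 2) :
    2 * Nat.card {u : Fˣ // IsSquare ((u : F) + 1)} = Fintype.card F - 1 := by
  classical
  have hshift : Nat.card {u : Fˣ // IsSquare ((u : F) + 1)} =
      #((univ.filter fun x : F => IsSquare x).erase 1) := by
    rw [Nat.card_eq_fintype_card, Fintype.card_subtype]
    refine card_bij (fun u _ => (u : F) + 1) (fun u hu => ?_) (fun u _ v _ h => ?_) fun y hy => ?_
    · simpa using (mem_filter.1 hu).2
    · exact Units.ext (add_right_cancel h)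
    · obtain ⟨hy1, hy⟩ := mem_erase.1 hy
      exact ⟨Units.mk0 (y - 1) (sub_ne_zero.2 hy1), by simpa using (mem_filter.1 hy).2, by simp⟩
  have := two_mul_card_isSquare hF
  rw [Nat.card_eq_fintype_card, Fintype.card_subtype] at this
  rw [hshift, card_erase_of_mem (by simp)]
  omega

theorem abs_two_mul_factorial_mul_card_sub_pow_le (hF : ringChar F ≠ 2) {k : ℕ} (hk : k ≠ 0) :
    |2 * (k ! : ℝ) * Nat.card {S : Finset F // #S = k ∧ 0 ∉ S ∧ IsSquare (S.prod id + 1)} -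
        Fintype.card F ^ k| ≤ k ^ 2 * Fintype.card F ^ (k - 1) := by
  classical
  obtain ⟨m, rfl⟩ := Nat.exists_eq_add_one_of_ne_zero hk
  set q := Fintype.card F
  have hq : 1 ≤ q := Fintype.card_pos
  have hunits := abs_factorial_mul_card_finset_prod_sub_le (fun u : Fˣ => IsSquare ((u : F) + 1)) m
  rw [card_finset_units_eq (m + 1) fun x : F => IsSquare (x + 1), Nat.card_units,
    Nat.card_eq_fintype_card (α := F), Nat.cast_sub hq, Nat.cast_one] at hunits
  have hsquares : 2 * (Nat.card {u : Fˣ // IsSquare ((u : F) + 1)} : ℝ) = q - 1 := by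
    have h : ((2 * Nat.card {u : Fˣ // IsSquare ((u : F) + 1)} : ℕ) : ℝ) = (q - 1 : ℕ) :=
      congrArg Nat.cast (two_mul_card_units_isSquare_add_one hF)
    rwa [Nat.cast_sub hq, Nat.cast_mul, Nat.cast_one, Nat.cast_ofNat] at h
  have hchoose : 2 * ((m + 1).choose 2 : ℝ) = (m + 1) * m := by
    have := Nat.add_one_mul_choose_eq m 1
    rw [Nat.choose_one_right] at this
    exact_mod_cast by linarith
  have hq' : (1 : ℝ) ≤ q := by exact_mod_cast hq
  have hmono : ((q : ℝ) - 1) ^ m ≤ (q : ℝ) ^ m := pow_le_pow_left₀ (by linarith) (by linarith) m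
  rw [Nat.add_sub_cancel]
  calc _ = |2 * ((m + 1)! *
              Nat.card {S : Finset F // #S = m + 1 ∧ 0 ∉ S ∧ IsSquare (S.prod id + 1)}
          - Nat.card {u : Fˣ // IsSquare ((u : F) + 1)} * ((q : ℝ) - 1) ^ m)
          - ((q : ℝ) ^ (m + 1) - ((q : ℝ) - 1) ^ (m + 1))| := by
        congr 1; linear_combination ((q : ℝ) - 1) ^ m * hsquares
    _ ≤ 2 * ((m + 1).choose 2 * ((q : ℝ) - 1) ^ m) + (m + 1) * q ^ m := by
        refine (abs_sub _ _).trans (add_le_add ?_ (abs_pow_succ_sub_pow_succ_sub_one_le hq' m))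
        rw [abs_mul, abs_two]
        gcongr
    _ ≤ _ := by
        rw [← mul_assoc, hchoose]
        push_cast
        nlinarith [mul_le_mul_of_nonneg_left hmono (by positivity : (0 : ℝ) ≤ (m + 1) * m)]

end FiniteField

theorem asymptotic_k_diophantine_k_tuples (k : ℕ) (hk : 2 ≤ k) :
    ∃ C : ℝ, ∀ p : ℕ, p.Prime → Odd p →
      |(2 * (k.factorial : ℝ) *
          (Nat.card {S : Finset (ZMod p) // S.card = k ∧ (0 : ZMod p) ∉ S ∧
            IsSquare (S.prod id + 1)} : ℝ)) - (p : ℝ) ^ k| ≤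
        C * (p : ℝ) ^ (k - 1) * Real.sqrt p := by
  refine ⟨k ^ 2, fun p hp hodd => ?_⟩
  have := Fact.mk hp
  have hchar : ringChar (ZMod p) ≠ 2 := by
    rw [ZMod.ringChar_zmod_n]
    rintro rfl
    exact Nat.not_even_iff_odd.2 hodd even_two
  have hbound := FiniteField.abs_two_mul_factorial_mul_card_sub_pow_le hchar (k := k) (by omega)
  rw [ZMod.card] at hbound
  calc _ ≤ (k : ℝ) ^ 2 * p ^ (k - 1) := hbound
    _ ≤ _ := le_mul_of_one_le_right (by positivity)
      (Real.one_le_sqrt.2 (by exact_mod_cast hp.one_lt.le))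
end
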